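/- CM1 satisfies criterion (Z): fix any ε ∈ (0,1) and set ε_n = 1 − ε^{1/2ⁿ} and K_n = (ε^{1/2^{n−1}}, 1) for n ≥ 1. Then ε_n ≥ 0 and ε_n → 0, the K_n are nonempty Borel sets with K₁ ⊃ K₂ ⊃ … and ⋂_{n=1}^∞ K_n = ∅, and p(x,K_n) ≥ 1 − ε_n for every x ∈ K_{n+1} and every n. Consequently (by the criterion-Z theorem) CM1 has an invariant purely finitely additive probability measure μ with μ((ε^{1/2^{n−1}},1)) = 1 for all n. -/

import Mathlib

/-!
The points `x_k = ε^{1/2^k}` increase to `1` and satisfy `x_{k+1}² = x_k`, so from `x_{k+1}`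
the chain jumps to `x_k` with probability `x_{k+1} ≈ 1`. Take for `μ` a Banach limit of the
Dirac masses `δ_{x_k}` (an ultrafilter limit of Cesàro means). For `0 < t < 1` and `k` large,
`p(x_{k+1}, E) > t` holds iff `x_k ∈ E`, so by the layer-cake formula invariance of `μ` under
the chain is the shift invariance of the Banach limit. Every `K_n` contains all but finitely
many `x_k`, so `μ(K_n) = 1`; the complements of the `K_n` are `μ`-null and cover `ℝ`, so every
countably additive minorant of `μ` vanishes.
-/

open MeasureTheory Set Filter Topology Function

/-- A bounded finitely additive set function on the σ-algebra. -/
def IsFinAdd {X : Type*} [MeasurableSpace X] (μ : Set X → ℝ) : Prop :=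
  μ ∅ = 0 ∧ ∀ E F : Set X, MeasurableSet E → MeasurableSet F → Disjoint E F →
    μ (E ∪ F) = μ E + μ F

/-- Nonnegativity on measurable sets. -/
def IsNonnegSF {X : Type*} [MeasurableSpace X] (μ : Set X → ℝ) : Prop :=
  ∀ E : Set X, MeasurableSet E → 0 ≤ μ E

/-- Countable additivity on the σ-algebra. -/
def IsCtblAdd {X : Type*} [MeasurableSpace X] (μ : Set X → ℝ) : Prop :=
  ∀ E : ℕ → Set X, (∀ n, MeasurableSet (E n)) → Pairwise (Disjoint on E) →
    HasSum (fun n => μ (E n)) (μ (⋃ n, E n))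

/-- A nonnegative finitely additive measure is purely finitely additive if the only
countably additive measure `lam` with `0 ≤ lam ≤ μ` is `lam = 0`. -/
def IsPurelyFinAdd {X : Type*} [MeasurableSpace X] (μ : Set X → ℝ) : Prop :=
  ∀ lam : Set X → ℝ, IsFinAdd lam → IsCtblAdd lam →
    (∀ E, MeasurableSet E → 0 ≤ lam E) → (∀ E, MeasurableSet E → lam E ≤ μ E) →
    ∀ E, MeasurableSet E → lam E = 0

/-- The integral of a bounded measurable function with respect to a (finitely additive)
set function, defined by the layer-cake formula. -/
noncomputable def faIntegral {X : Type*} [MeasurableSpace X] (μ : Set X → ℝ) (f : X → ℝ) : ℝ :=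
  (∫ t in Set.Ioi (0:ℝ), μ {x | t < f x}) - (∫ t in Set.Ioi (0:ℝ), μ {x | f x < -t})

/-- The Dirac measure at `y`, as a set function. -/
noncomputable def diracSF (y : ℝ) (E : Set ℝ) : ℝ := E.indicator (fun _ => (1:ℝ)) y

/-- The transition function of CM1: `p(x,·) = x·δ_{x²} + (1-x)·δ₀` on `(0,1)`,
`p(0,·) = δ₀`, `p(1,·) = δ₁` (the formula below specializes correctly at `0` and `1`). -/
noncomputable def p1 (x : ℝ) (E : Set ℝ) : ℝ :=
  x * diracSF (x ^ 2) E + (1 - x) * diracSF 0 E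

/-- The transition function of CM2: `p(x,·) = (1-x)·δ_{x²} + x·δ₀` on `(0,1)`,
`p(0,·) = δ₀`, `p(1,·) = δ₁`. -/
noncomputable def p2 (x : ℝ) (E : Set ℝ) : ℝ :=
  if x = 1 then diracSF 1 E else (1 - x) * diracSF (x ^ 2) E + x * diracSF 0 E

/-- The transition function of CM3: the CM1 rule on `[0,1/2]`, the CM2 rule on `(1/2,1)`,
`p(1,·) = δ₁`. -/
noncomputable def p3 (x : ℝ) (E : Set ℝ) : ℝ :=
  if x = 1 then diracSF 1 E
  else if x ≤ 1 / 2 then x * diracSF (x ^ 2) E + (1 - x) * diracSF 0 E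
  else (1 - x) * diracSF (x ^ 2) E + x * diracSF 0 E

/-- The `n`-step transition function of CM1 (`p1n 0` is the identity kernel, and
`p1n (n+1) x E = ∫ p1n n (y,E) p(x,dy)` is the integral convolution). -/
noncomputable def p1n : ℕ → ℝ → Set ℝ → ℝ
  | 0 => fun x E => diracSF x E
  | n + 1 => fun x E => faIntegral (p1 x) fun y => p1n n y E

/-- The `n`-step transition function of CM2. -/
noncomputable def p2n : ℕ → ℝ → Set ℝ → ℝ
  | 0 => fun x E => diracSF x E
  | n + 1 => fun x E => faIntegral (p2 x) fun y => p2n n y E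

/-- The `n`-step transition function of CM3. -/
noncomputable def p3n : ℕ → ℝ → Set ℝ → ℝ
  | 0 => fun x E => diracSF x E
  | n + 1 => fun x E => faIntegral (p3 x) fun y => p3n n y E

/-- `ε_n = 1 - ε^{1/2ⁿ}`. -/
noncomputable def epsSeq (ε : ℝ) (n : ℕ) : ℝ := 1 - ε ^ ((1:ℝ) / 2 ^ n)

/-- `K_n = (ε^{1/2^{n-1}}, 1)`. -/
noncomputable def Kseq (ε : ℝ) (n : ℕ) : Set ℝ := Set.Ioo (ε ^ ((1:ℝ) / 2 ^ (n - 1))) 1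

noncomputable def cesaroMean (u : ℕ → ℝ) (n : ℕ) : ℝ := (n : ℝ)⁻¹ * ∑ i ∈ Finset.range n, u i

/-- For `U ≤ atTop` this is a Banach limit on bounded sequences (junk on unbounded ones). -/
noncomputable def cesaroLim (U : Ultrafilter ℕ) (u : ℕ → ℝ) : ℝ := limUnder U (cesaroMean u)

lemma cesaroMean_sub (u v : ℕ → ℝ) (n : ℕ) :
    cesaroMean u n - cesaroMean v n = cesaroMean (fun k => u k - v k) n := by
  simp only [cesaroMean, Finset.sum_sub_distrib, mul_sub]

lemma abs_cesaroMean_le {u : ℕ → ℝ} {C : ℝ} (hu : ∀ k, |u k| ≤ C) (n : ℕ) :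
    |cesaroMean u n| ≤ C := by
  rcases Nat.eq_zero_or_pos n with rfl | hn
  · simpa [cesaroMean] using (abs_nonneg _).trans (hu 0)
  have hn' : (0 : ℝ) < n := Nat.cast_pos.2 hn
  calc |cesaroMean u n| = (n : ℝ)⁻¹ * |∑ i ∈ Finset.range n, u i| := by
        rw [cesaroMean, abs_mul, abs_inv, Nat.abs_cast]
    _ ≤ (n : ℝ)⁻¹ * ∑ _i ∈ Finset.range n, C := by
        gcongr
        exact (Finset.abs_sum_le_sum_abs _ _).trans (Finset.sum_le_sum fun i _ => hu i)
    _ = C := by simp [hn'.ne']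

section cesaroLim

variable {U : Ultrafilter ℕ} {u v : ℕ → ℝ} {C : ℝ}

lemma tendsto_cesaroLim (hu : ∀ k, |u k| ≤ C) :
    Tendsto (cesaroMean u) U (𝓝 (cesaroLim U u)) := by
  have hbdd : Set.Icc (-C) C ∈ U.map (cesaroMean u) :=
    Ultrafilter.mem_map.2 (univ_mem' fun n => abs_le.1 (abs_cesaroMean_le hu n))
  obtain ⟨l, -, hl⟩ := isCompact_Icc.ultrafilter_le_nhds' _ hbdd
  exact tendsto_nhds_limUnder ⟨l, hl⟩

lemma cesaroLim_eq_of_tendsto {c : ℝ} (h : Tendsto (cesaroMean u) U (𝓝 c)) : cesaroLim U u = c :=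
  h.limUnder_eq

lemma cesaroLim_add {D : ℝ} (hu : ∀ k, |u k| ≤ C) (hv : ∀ k, |v k| ≤ D) :
    cesaroLim U (fun k => u k + v k) = cesaroLim U u + cesaroLim U v := by
  refine cesaroLim_eq_of_tendsto (((tendsto_cesaroLim hu).add (tendsto_cesaroLim hv)).congr
    fun n => ?_)
  simp only [cesaroMean, Finset.sum_add_distrib, mul_add]

lemma cesaroLim_nonneg (hu : ∀ k, |u k| ≤ C) (h : ∀ k, 0 ≤ u k) : 0 ≤ cesaroLim U u :=
  ge_of_tendsto' (tendsto_cesaroLim hu) fun n =>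
    mul_nonneg (by positivity) (Finset.sum_nonneg fun k _ => h k)

variable (hU : (U : Filter ℕ) ≤ atTop)
include hU

lemma cesaroLim_eq_of_tendsto_atTop {l : ℝ} (h : Tendsto u atTop (𝓝 l)) : cesaroLim U u = l :=
  cesaroLim_eq_of_tendsto (h.cesaro.mono_left hU)

lemma cesaroLim_eq_of_tendsto_cesaroMean_sub (hv : ∀ k, |v k| ≤ C)
    (h : Tendsto (fun n => cesaroMean u n - cesaroMean v n) atTop (𝓝 0)) :
    cesaroLim U u = cesaroLim U v := by
  refine cesaroLim_eq_of_tendsto ?_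
  simpa using ((tendsto_cesaroLim hv).add (h.mono_left hU)).congr fun n => by ring

lemma cesaroLim_congr_eventually (hv : ∀ k, |v k| ≤ C) (h : u =ᶠ[atTop] v) :
    cesaroLim U u = cesaroLim U v := by
  refine cesaroLim_eq_of_tendsto_cesaroMean_sub hU hv ?_
  simp only [cesaroMean_sub]
  refine Tendsto.cesaro (tendsto_const_nhds.congr' ?_)
  filter_upwards [h] with k hk
  rw [hk, sub_self]

lemma cesaroLim_shift (hu : ∀ k, |u k| ≤ C) :
    cesaroLim U (fun k => u (k + 1)) = cesaroLim U u := by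
  refine cesaroLim_eq_of_tendsto_cesaroMean_sub hU hu ?_
  simp only [cesaroMean_sub]
  simp only [cesaroMean, Finset.sum_range_sub u]
  refine squeeze_zero_norm (fun n => ?_) (tendsto_const_div_atTop_nhds_zero_nat (2 * C))
  calc ‖(n : ℝ)⁻¹ * (u n - u 0)‖ = |u n - u 0| / n := by
        rw [Real.norm_eq_abs, abs_mul, abs_inv, Nat.abs_cast, inv_mul_eq_div]
    _ ≤ 2 * C / n := by
        gcongr
        linarith [abs_sub (u n) (u 0), hu n, hu 0]

end cesaroLim

lemma diracSF_nonneg (y : ℝ) (E : Set ℝ) : 0 ≤ diracSF y E :=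
  Set.indicator_nonneg (fun _ _ => zero_le_one) y

lemma diracSF_le_one (y : ℝ) (E : Set ℝ) : diracSF y E ≤ 1 :=
  Set.indicator_le_self' (fun _ _ => zero_le_one) y

lemma abs_diracSF_le (y : ℝ) (E : Set ℝ) : |diracSF y E| ≤ 1 :=
  abs_le.2 ⟨by linarith [diracSF_nonneg y E], diracSF_le_one y E⟩

lemma diracSF_of_mem {y : ℝ} {E : Set ℝ} (h : y ∈ E) : diracSF y E = 1 :=
  Set.indicator_of_mem h _

lemma diracSF_of_notMem {y : ℝ} {E : Set ℝ} (h : y ∉ E) : diracSF y E = 0 :=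
  Set.indicator_of_notMem h _

noncomputable def cesaroDiracMeasure (x : ℕ → ℝ) (E : Set ℝ) : ℝ :=
  cesaroLim (Ultrafilter.of atTop) fun k => diracSF (x k) E

namespace cesaroDiracMeasure

variable (x : ℕ → ℝ)

lemma nonneg (E : Set ℝ) : 0 ≤ cesaroDiracMeasure x E :=
  cesaroLim_nonneg (fun _ => abs_diracSF_le _ _) fun _ => diracSF_nonneg _ _

lemma union_of_disjoint {E F : Set ℝ} (h : Disjoint E F) :
    cesaroDiracMeasure x (E ∪ F) = cesaroDiracMeasure x E + cesaroDiracMeasure x F := by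
  simp only [cesaroDiracMeasure, diracSF, Set.indicator_union_of_disjoint h]
  exact cesaroLim_add (fun _ => abs_diracSF_le _ _) fun _ => abs_diracSF_le _ _

variable {x}

lemma eq_one_of_eventually_mem {E : Set ℝ} (h : ∀ᶠ k in atTop, x k ∈ E) :
    cesaroDiracMeasure x E = 1 :=
  cesaroLim_eq_of_tendsto_atTop (Ultrafilter.of_le _)
    (tendsto_const_nhds.congr' (h.mono fun _ hk => (diracSF_of_mem hk).symm))

lemma eq_zero_of_eventually_notMem {E : Set ℝ} (h : ∀ᶠ k in atTop, x k ∉ E) :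
    cesaroDiracMeasure x E = 0 :=
  cesaroLim_eq_of_tendsto_atTop (Ultrafilter.of_le _)
    (tendsto_const_nhds.congr' (h.mono fun _ hk => (diracSF_of_notMem hk).symm))

lemma eq_of_eventually_succ_mem_iff {S E : Set ℝ} (h : ∀ᶠ k in atTop, x (k + 1) ∈ S ↔ x k ∈ E) :
    cesaroDiracMeasure x S = cesaroDiracMeasure x E := by
  have hU : (Ultrafilter.of (atTop : Filter ℕ) : Filter ℕ) ≤ atTop := Ultrafilter.of_le _
  rw [cesaroDiracMeasure, ← cesaroLim_shift hU fun _ => abs_diracSF_le _ _]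
  refine cesaroLim_congr_eventually hU (fun _ => abs_diracSF_le _ _) (h.mono fun k hk => ?_)
  show diracSF (x (k + 1)) S = diracSF (x k) E
  by_cases hE : x k ∈ E
  · rw [diracSF_of_mem hE, diracSF_of_mem (hk.2 hE)]
  · rw [diracSF_of_notMem hE, diracSF_of_notMem (mt hk.1 hE)]

lemma isFinAdd : IsFinAdd (cesaroDiracMeasure x) :=
  ⟨eq_zero_of_eventually_notMem (Eventually.of_forall fun _ => Set.notMem_empty _),
    fun _ _ _ _ => union_of_disjoint x⟩

end cesaroDiracMeasure

section SetFunction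

variable {X : Type*} [MeasurableSpace X]

lemma IsFinAdd.mono {μ : Set X → ℝ} (hμ : IsFinAdd μ) (h0 : IsNonnegSF μ) {A B : Set X}
    (hA : MeasurableSet A) (hB : MeasurableSet B) (hAB : A ⊆ B) : μ A ≤ μ B := by
  have hsplit := hμ.2 A (B \ A) hA (hB.diff hA) disjoint_sdiff_self_right
  rw [Set.union_sdiff_cancel hAB] at hsplit
  linarith [h0 _ (hB.diff hA)]

lemma isPurelyFinAdd_of_iUnion_eq_univ {μ : Set X → ℝ} {C : ℕ → Set X}
    (hC : ∀ n, MeasurableSet (C n)) (hcover : ⋃ n, C n = Set.univ) (hμC : ∀ n, μ (C n) = 0) :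
    IsPurelyFinAdd μ := by
  intro lam hfa hca hnn hle E hE
  have hdisj : ∀ n, lam (disjointed C n) = 0 := fun n =>
    le_antisymm ((hfa.mono hnn (MeasurableSet.disjointed hC n) (hC n)
      (disjointed_subset C n)).trans ((hle _ (hC n)).trans (hμC n).le))
      (hnn _ (MeasurableSet.disjointed hC n))
  have huniv : lam Set.univ = 0 := by
    have hsum := hca _ (MeasurableSet.disjointed hC) (disjoint_disjointed C)
    rw [iUnion_disjointed, hcover] at hsum
    exact hsum.unique (by simpa only [hdisj] using hasSum_zero)
  exact le_antisymm (huniv ▸ hfa.mono hnn hE MeasurableSet.univ (Set.subset_univ E)) (hnn E hE)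

lemma faIntegral_eq_of_superlevel {μ : Set X → ℝ} {f : X → ℝ} {c : ℝ}
    (hneg : ∀ t, 0 < t → μ {x | f x < -t} = 0)
    (hmid : ∀ t ∈ Set.Ioo (0 : ℝ) 1, μ {x | t < f x} = c)
    (htop : ∀ t, 1 ≤ t → μ {x | t < f x} = 0) :
    faIntegral μ f = c := by
  have hlevel : Set.EqOn (fun t => μ {x | t < f x}) ((Set.Ioo 0 1).indicator fun _ => c)
      (Set.Ioi 0) := by
    intro t (ht : 0 < t)
    by_cases ht1 : t < 1
    · exact (hmid t ⟨ht, ht1⟩).trans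
        (Set.indicator_of_mem (Set.mem_Ioo.2 ⟨ht, ht1⟩) fun _ => c).symm
    · exact (htop t (not_lt.1 ht1)).trans
        (Set.indicator_of_notMem (fun h => ht1 h.2) fun _ => c).symm
  rw [faIntegral, setIntegral_congr_fun measurableSet_Ioi hlevel,
    setIntegral_congr_fun measurableSet_Ioi (fun t (ht : 0 < t) => hneg t ht),
    integral_indicator measurableSet_Ioo, Measure.restrict_restrict measurableSet_Ioo,
    Set.inter_eq_left.2 Set.Ioo_subset_Ioi_self]
  simp

end SetFunction

lemma p1_nonneg {x : ℝ} (hx : x ∈ Set.Icc (0 : ℝ) 1) (E : Set ℝ) : 0 ≤ p1 x E :=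
  add_nonneg (mul_nonneg hx.1 (diracSF_nonneg _ _))
    (mul_nonneg (sub_nonneg.2 hx.2) (diracSF_nonneg _ _))

lemma p1_le_one {x : ℝ} (hx : x ∈ Set.Icc (0 : ℝ) 1) (E : Set ℝ) : p1 x E ≤ 1 := by
  have h₁ := mul_le_mul_of_nonneg_left (diracSF_le_one (x ^ 2) E) hx.1
  have h₀ := mul_le_mul_of_nonneg_left (diracSF_le_one 0 E) (sub_nonneg.2 hx.2)
  linarith [show p1 x E = x * diracSF (x ^ 2) E + (1 - x) * diracSF 0 E from rfl]

/-- Near `1` the atom at `0` is too light to lift `p1 x E` above `t`, so only the atom at `x²`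
decides. -/
lemma lt_p1_iff {x t : ℝ} (htx : t < x) (ht : 1 - t < x) (hx : x ≤ 1) (E : Set ℝ) :
    t < p1 x E ↔ x ^ 2 ∈ E := by
  have h0 := diracSF_nonneg 0 E
  have h1 := diracSF_le_one 0 E
  by_cases hE : x ^ 2 ∈ E
  · simp only [hE, iff_true, p1, diracSF_of_mem hE]
    nlinarith
  · simp only [hE, iff_false, not_lt, p1, diracSF_of_notMem hE]
    nlinarith

noncomputable def iterSqrt (ε : ℝ) (k : ℕ) : ℝ := ε ^ ((1 : ℝ) / 2 ^ k)

lemma one_sub_epsSeq (ε : ℝ) (n : ℕ) : 1 - epsSeq ε n = iterSqrt ε n := sub_sub_cancel _ _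

lemma Kseq_succ (ε : ℝ) (n : ℕ) : Kseq ε (n + 1) = Set.Ioo (iterSqrt ε n) 1 := by
  simp [Kseq, iterSqrt]

section iterSqrt

variable {ε : ℝ} (hε : ε ∈ Set.Ioo (0 : ℝ) 1)
include hε

lemma iterSqrt_pos (k : ℕ) : 0 < iterSqrt ε k := Real.rpow_pos_of_pos hε.1 _

lemma iterSqrt_lt_one (k : ℕ) : iterSqrt ε k < 1 :=
  Real.rpow_lt_one hε.1.le hε.2 (by positivity)

lemma iterSqrt_mem_Icc (k : ℕ) : iterSqrt ε k ∈ Set.Icc (0 : ℝ) 1 :=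
  ⟨(iterSqrt_pos hε k).le, (iterSqrt_lt_one hε k).le⟩

lemma iterSqrt_succ_sq (k : ℕ) : iterSqrt ε (k + 1) ^ 2 = iterSqrt ε k := by
  rw [iterSqrt, iterSqrt, ← Real.rpow_natCast, ← Real.rpow_mul hε.1.le, pow_succ]
  congr 1
  push_cast
  field_simp

lemma iterSqrt_strictMono : StrictMono (iterSqrt ε) := strictMono_nat_of_lt_succ fun k => by
  rw [← iterSqrt_succ_sq hε k]
  exact pow_lt_self_of_lt_one₀ (iterSqrt_pos hε _) (iterSqrt_lt_one hε _) one_lt_two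

lemma tendsto_iterSqrt : Tendsto (iterSqrt ε) atTop (𝓝 1) := by
  have hexp : Tendsto (fun k : ℕ => (1 : ℝ) / 2 ^ k) atTop (𝓝 0) := by
    simpa only [one_div_pow] using
      tendsto_pow_atTop_nhds_zero_of_lt_one (r := (1 : ℝ) / 2) (by norm_num) (by norm_num)
  have h := (tendsto_const_nhds (x := ε)).rpow hexp (Or.inl hε.1.ne')
  rwa [Real.rpow_zero] at h

lemma eventually_lt_iterSqrt {y : ℝ} (hy : y < 1) : ∀ᶠ k in atTop, y < iterSqrt ε k :=
  (tendsto_iterSqrt hε).eventually (eventually_gt_nhds hy)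

end iterSqrt

lemma forall_one_le_of_forall_succ {P : ℕ → Prop} (h : ∀ n, P (n + 1)) (n : ℕ) (hn : 1 ≤ n) :
    P n := by
  obtain ⟨m, rfl⟩ := Nat.exists_eq_add_of_le' hn
  exact h m

section CriterionZ

variable {ε : ℝ} (hε : ε ∈ Set.Ioo (0 : ℝ) 1)
include hε

lemma epsSeq_nonneg (n : ℕ) : 0 ≤ epsSeq ε n := sub_nonneg.2 (iterSqrt_lt_one hε n).le

lemma tendsto_epsSeq : Tendsto (epsSeq ε) atTop (𝓝 0) := by
  have h := (tendsto_const_nhds (x := (1 : ℝ))).sub (tendsto_iterSqrt hε)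
  rwa [sub_self] at h

lemma Kseq_succ_nonempty (n : ℕ) : (Kseq ε (n + 1)).Nonempty := by
  rw [Kseq_succ]
  exact Set.nonempty_Ioo.2 (iterSqrt_lt_one hε n)

lemma Kseq_succ_succ_subset (n : ℕ) : Kseq ε (n + 1 + 1) ⊆ Kseq ε (n + 1) := by
  rw [Kseq_succ, Kseq_succ]
  exact Set.Ioo_subset_Ioo_left ((iterSqrt_strictMono hε).monotone n.le_succ)

lemma iterSqrt_mem_Kseq_succ_iff {n k : ℕ} : iterSqrt ε k ∈ Kseq ε (n + 1) ↔ n < k := by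
  rw [Kseq_succ, Set.mem_Ioo, (iterSqrt_strictMono hε).lt_iff_lt]
  exact and_iff_left (iterSqrt_lt_one hε k)

lemma iInter_Kseq_succ_eq_empty : ⋂ n, Kseq ε (n + 1) = ∅ := by
  refine Set.eq_empty_of_forall_notMem fun y hy => ?_
  have hy : ∀ n, iterSqrt ε n < y ∧ y < 1 := fun n => by
    simpa only [Kseq_succ, Set.mem_Ioo] using Set.mem_iInter.1 hy n
  obtain ⟨n, hn⟩ := (eventually_lt_iterSqrt hε (hy 0).2).exists
  exact (hy n).1.not_gt hn

lemma one_sub_epsSeq_le_p1 (n : ℕ) {x : ℝ} (hx : x ∈ Kseq ε (n + 1 + 1)) :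
    1 - epsSeq ε (n + 1) ≤ p1 x (Kseq ε (n + 1)) := by
  rw [Kseq_succ] at hx
  have hsq : x ^ 2 ∈ Kseq ε (n + 1) := by
    rw [Kseq_succ, ← iterSqrt_succ_sq hε n]
    exact ⟨pow_lt_pow_left₀ hx.1 (iterSqrt_pos hε _).le two_ne_zero,
      pow_lt_one₀ ((iterSqrt_pos hε _).trans hx.1).le hx.2 two_ne_zero⟩
  have hzero : (0 : ℝ) ∉ Kseq ε (n + 1) := by
    rw [Kseq_succ]
    exact fun h => (iterSqrt_pos hε n).not_ge h.1.le
  rw [one_sub_epsSeq, p1, diracSF_of_mem hsq, diracSF_of_notMem hzero]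
  linarith [hx.1]

lemma cesaroDiracMeasure_iterSqrt_Kseq_succ (n : ℕ) :
    cesaroDiracMeasure (iterSqrt ε) (Kseq ε (n + 1)) = 1 :=
  cesaroDiracMeasure.eq_one_of_eventually_mem ((eventually_gt_atTop n).mono fun _ hk =>
    (iterSqrt_mem_Kseq_succ_iff hε).2 hk)

lemma isPurelyFinAdd_cesaroDiracMeasure_iterSqrt :
    IsPurelyFinAdd (cesaroDiracMeasure (iterSqrt ε)) := by
  refine isPurelyFinAdd_of_iUnion_eq_univ (C := fun n => (Kseq ε (n + 1))ᶜ)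
    (fun n => measurableSet_Ioo.compl) ?_ fun n => ?_
  · rw [← Set.compl_iInter, iInter_Kseq_succ_eq_empty hε, Set.compl_empty]
  · refine cesaroDiracMeasure.eq_zero_of_eventually_notMem ?_
    exact (eventually_gt_atTop n).mono fun _ hk => not_not.2 ((iterSqrt_mem_Kseq_succ_iff hε).2 hk)

lemma faIntegral_p1_cesaroDiracMeasure_iterSqrt (E : Set ℝ) :
    faIntegral (cesaroDiracMeasure (iterSqrt ε)) (fun x => p1 x E) =
      cesaroDiracMeasure (iterSqrt ε) E := by
  refine faIntegral_eq_of_superlevel (fun t ht => ?_) (fun t ht => ?_) (fun t ht => ?_)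
  · refine cesaroDiracMeasure.eq_zero_of_eventually_notMem (Eventually.of_forall fun k hk => ?_)
    linarith [p1_nonneg (iterSqrt_mem_Icc hε k) E, show p1 (iterSqrt ε k) E < -t from hk]
  · refine cesaroDiracMeasure.eq_of_eventually_succ_mem_iff ?_
    have hnear := (eventually_lt_iterSqrt hε ht.2).and
      (eventually_lt_iterSqrt hε (by linarith [ht.1] : 1 - t < 1))
    filter_upwards [(tendsto_add_atTop_nat 1).eventually hnear] with k ⟨htx, ht'⟩
    rw [← iterSqrt_succ_sq hε k]
    exact lt_p1_iff htx ht' (iterSqrt_lt_one hε _).le E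
  · refine cesaroDiracMeasure.eq_zero_of_eventually_notMem (Eventually.of_forall fun k hk => ?_)
    linarith [p1_le_one (iterSqrt_mem_Icc hε k) E, show t < p1 (iterSqrt ε k) E from hk]

end CriterionZ

/-- CM1 satisfies criterion (Z) with `ε_n = 1 - ε^{1/2ⁿ}` and `K_n = (ε^{1/2^{n-1}}, 1)`;
consequently CM1 has an invariant purely finitely additive probability measure `μ` with
`μ(K_n) = 1` for all `n ≥ 1`. -/
theorem cm1_criterionZ (ε : ℝ) (hε : ε ∈ Set.Ioo (0:ℝ) 1) :
    (∀ n : ℕ, 1 ≤ n → 0 ≤ epsSeq ε n) ∧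
    Tendsto (epsSeq ε) atTop (nhds 0) ∧
    (∀ n : ℕ, 1 ≤ n → (Kseq ε n).Nonempty ∧ MeasurableSet (Kseq ε n)) ∧
    (∀ n : ℕ, 1 ≤ n → Kseq ε (n + 1) ⊆ Kseq ε n) ∧
    (⋂ (n : ℕ) (_ : 1 ≤ n), Kseq ε n) = ∅ ∧
    (∀ n : ℕ, 1 ≤ n → ∀ x ∈ Kseq ε (n + 1), 1 - epsSeq ε n ≤ p1 x (Kseq ε n)) ∧
    ∃ μ : Set ℝ → ℝ, IsFinAdd μ ∧ IsNonnegSF μ ∧ μ Set.univ = 1 ∧ IsPurelyFinAdd μ ∧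
      (∀ E : Set ℝ, MeasurableSet E → faIntegral μ (fun x => p1 x E) = μ E) ∧
      ∀ n : ℕ, 1 ≤ n → μ (Kseq ε n) = 1 := by
  have hInter : (⋂ (n : ℕ) (_ : 1 ≤ n), Kseq ε n) ⊆ ⋂ n, Kseq ε (n + 1) :=
    Set.subset_iInter fun n => Set.iInter₂_subset (n + 1) n.succ_pos
  refine ⟨fun n _ => epsSeq_nonneg hε n, tendsto_epsSeq hε,
    forall_one_le_of_forall_succ fun n => ⟨Kseq_succ_nonempty hε n, measurableSet_Ioo⟩,
    forall_one_le_of_forall_succ (Kseq_succ_succ_subset hε),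
    Set.subset_eq_empty hInter (iInter_Kseq_succ_eq_empty hε),
    forall_one_le_of_forall_succ (one_sub_epsSeq_le_p1 hε),
    cesaroDiracMeasure (iterSqrt ε), cesaroDiracMeasure.isFinAdd,
    fun E _ => cesaroDiracMeasure.nonneg _ E,
    cesaroDiracMeasure.eq_one_of_eventually_mem (Eventually.of_forall fun _ => Set.mem_univ _),
    isPurelyFinAdd_cesaroDiracMeasure_iterSqrt hε,
    fun E _ => faIntegral_p1_cesaroDiracMeasure_iterSqrt hε E,
    forall_one_le_of_forall_succ (cesaroDiracMeasure_iterSqrt_Kseq_succ hε)⟩
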